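/- arXiv:math/0603196 — 2 statements merged into one kernel-verified Lean document; each statement's English description precedes it below -/
import Mathlib

section
/- Fix q ∈ ℂ with 0 < |q| < 1 and an integer n ≥ 1. Then for every u ∈ ℂ∖{0}, the product of Θ(ζu) over all n-th roots of unity ζ ∈ ℂ equals ϑⁿ₀(u): ∏_{ζⁿ=1} Θ(ζu) = (1 − u^{−n})·∏_{k≥1}(1 − q^{nk}uⁿ)(1 − q^{nk}u^{−n}) = ϑⁿ₀(u). -/
open Complex Filter Topology

/-- The basic theta function `Θ(u) = (1 − u⁻¹)·∏_{k≥1}(1 − qᵏu)(1 − qᵏu⁻¹)` on `ℂ∖{0}`. -/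
noncomputable def Theta (q u : ℂ) : ℂ :=
  (1 - u⁻¹) * ∏' k : ℕ, ((1 - q ^ (k + 1) * u) * (1 - q ^ (k + 1) * u⁻¹))

/-- `ϑⁿₐ(u) = ∏_{ℓ≥1, ℓ≡a mod n}(1 − q^ℓ uⁿ) · ∏_{ℓ≤0, ℓ≡a mod n}(1 − q^{−ℓ} u^{−n})`. -/
noncomputable def thetaNA (q : ℂ) (n : ℕ) (a : ℤ) (u : ℂ) : ℂ :=
  (∏' ℓ : {ℓ : ℤ // 1 ≤ ℓ ∧ (n : ℤ) ∣ ℓ - a}, (1 - q ^ (ℓ : ℤ) * u ^ (n : ℤ))) *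
  (∏' ℓ : {ℓ : ℤ // ℓ ≤ 0 ∧ (n : ℤ) ∣ ℓ - a}, (1 - q ^ (-(ℓ : ℤ)) * u ^ (-(n : ℤ))))

/-! Each factor of `Θ(ζu)` has the form `1 - ζc` or `1 - ζ⁻¹c`, and over the `n`-th roots of unity
`∏ (1 - ζc) = 1 - cⁿ` (from `xⁿ - yⁿ = ∏ (x - ζy)`, with `ζ ↦ ζ⁻¹` permuting the roots). For `‖q‖ < 1`
the finite product over `ζ` commutes with the convergent product over `k`, giving the middle
expression; `ϑⁿ₀(u)` is the same product reindexed by `ℓ = n(k+1)` and `ℓ = -nk`. -/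

open Polynomial

namespace IsPrimitiveRoot

variable {R : Type*} [CommRing R] [IsDomain R] {n : ℕ} {ω : R}

lemma multiset_prod_map_nthRoots_one {M : Type*} [CommMonoid M] (hω : IsPrimitiveRoot ω n)
    (f : R → M) : ((nthRoots n (1 : R)).map f).prod = ∏ ζ ∈ nthRootsFinset n (1 : R), f ζ := by
  classical
  rw [Finset.prod_eq_multiset_prod, nthRootsFinset_def, Multiset.toFinset_val,
    hω.nthRoots_one_nodup.dedup]

lemma prod_nthRootsFinset_one_sub_mul (hω : IsPrimitiveRoot ω n) (hn : 0 < n) (c : R) :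
    ∏ ζ ∈ nthRootsFinset n (1 : R), (1 - ζ * c) = 1 - c ^ n := by
  rw [← hω.pow_sub_pow_eq_prod_sub_mul 1 c hn, one_pow]

end IsPrimitiveRoot

lemma prod_nthRootsFinset_one_comp_inv {K M : Type*} [Field K] [CommMonoid M] (n : ℕ)
    (f : K → M) : ∏ ζ ∈ nthRootsFinset n (1 : K), f ζ⁻¹ = ∏ ζ ∈ nthRootsFinset n (1 : K), f ζ := by
  rcases n.eq_zero_or_pos with rfl | hn
  · simp
  have hinv : ∀ ζ ∈ nthRootsFinset n (1 : K), ζ⁻¹ ∈ nthRootsFinset n (1 : K) := by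
    intro ζ hζ
    rw [mem_nthRootsFinset hn] at hζ ⊢
    rw [inv_pow, hζ, inv_one]
  exact Finset.prod_nbij' (·⁻¹) (·⁻¹) hinv hinv (fun ζ _ => inv_inv ζ) (fun ζ _ => inv_inv ζ)
    (fun _ _ => rfl)

lemma multipliable_one_sub_pow_succ_mul {q : ℂ} (hq : ‖q‖ < 1) (c : ℂ) :
    Multipliable fun k : ℕ => 1 - q ^ (k + 1) * c := by
  simp_rw [sub_eq_add_neg]
  apply multipliable_one_add_of_summable
  simpa [norm_mul, norm_pow, pow_succ, mul_assoc] using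
    ((summable_geometric_of_lt_one (norm_nonneg q) hq).mul_right (‖q‖ * ‖c‖))

lemma prod_nthRootsFinset_theta {q : ℂ} (hq : ‖q‖ < 1) {n : ℕ} (hn : 0 < n) {ω : ℂ}
    (hω : IsPrimitiveRoot ω n) (u : ℂ) :
    ∏ ζ ∈ nthRootsFinset n (1 : ℂ), Theta q (ζ * u) =
      (1 - u⁻¹ ^ n) * ∏' k : ℕ, ((1 - (q ^ (k + 1) * u) ^ n) * (1 - (q ^ (k + 1) * u⁻¹) ^ n)) := by
  have hfactor : ∀ ζ : ℂ, Theta q (ζ * u) = (1 - ζ⁻¹ * u⁻¹) *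
      ∏' k : ℕ, ((1 - ζ * (q ^ (k + 1) * u)) * (1 - ζ⁻¹ * (q ^ (k + 1) * u⁻¹))) := by
    intro ζ
    rw [Theta, mul_inv]
    congr 1
    exact tprod_congr fun k => by ring
  have hmult : ∀ ζ : ℂ, Multipliable fun k : ℕ =>
      (1 - ζ * (q ^ (k + 1) * u)) * (1 - ζ⁻¹ * (q ^ (k + 1) * u⁻¹)) := fun ζ =>
    ((multipliable_one_sub_pow_succ_mul hq (ζ * u)).mul
      (multipliable_one_sub_pow_succ_mul hq (ζ⁻¹ * u⁻¹))).congr fun k => by ring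
  have hinv : ∀ c : ℂ, ∏ ζ ∈ nthRootsFinset n (1 : ℂ), (1 - ζ⁻¹ * c) = 1 - c ^ n := fun c => by
    rw [prod_nthRootsFinset_one_comp_inv n (fun ζ => 1 - ζ * c),
      hω.prod_nthRootsFinset_one_sub_mul hn]
  rw [Finset.prod_congr rfl fun ζ _ => hfactor ζ, Finset.prod_mul_distrib, hinv,
    ← Multipliable.tprod_finsetProd fun ζ _ => hmult ζ]
  simp only [Finset.prod_mul_distrib, hinv, hω.prod_nthRootsFinset_one_sub_mul hn]

lemma tprod_multiples_pos {M : Type*} [CommMonoid M] [TopologicalSpace M] (f : ℤ → M) {n : ℕ}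
    (hn : 0 < n) :
    ∏' ℓ : {ℓ : ℤ // 1 ≤ ℓ ∧ (n : ℤ) ∣ ℓ - 0}, f ℓ = ∏' k : ℕ, f (n * (k + 1)) := by
  have hn' : (0 : ℤ) < n := by exact_mod_cast hn
  let e : ℕ → {ℓ : ℤ // 1 ≤ ℓ ∧ (n : ℤ) ∣ ℓ - 0} := fun k =>
    ⟨n * (k + 1), by nlinarith, k + 1, by ring⟩
  have he : e.Bijective := by
    refine ⟨fun k l hkl => ?_, fun ⟨ℓ, hℓ, m, hm⟩ => ⟨(m - 1).toNat, ?_⟩⟩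
    · have := congrArg Subtype.val hkl
      simp only [e] at this
      have := mul_left_cancel₀ hn'.ne' this
      omega
    · have hm1 : 1 ≤ m := by nlinarith
      ext
      simp only [e]
      rw [Int.toNat_of_nonneg (by omega)]
      linarith
  exact ((Equiv.ofBijective e he).tprod_eq fun ℓ => f ℓ).symm

lemma tprod_multiples_nonpos {M : Type*} [CommMonoid M] [TopologicalSpace M] (f : ℤ → M) {n : ℕ}
    (hn : 0 < n) :
    ∏' ℓ : {ℓ : ℤ // ℓ ≤ 0 ∧ (n : ℤ) ∣ ℓ - 0}, f ℓ = ∏' k : ℕ, f (-(n * k)) := by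
  have hn' : (0 : ℤ) < n := by exact_mod_cast hn
  let e : ℕ → {ℓ : ℤ // ℓ ≤ 0 ∧ (n : ℤ) ∣ ℓ - 0} := fun k =>
    ⟨-(n * k), by nlinarith, -k, by ring⟩
  have he : e.Bijective := by
    refine ⟨fun k l hkl => ?_, fun ⟨ℓ, hℓ, m, hm⟩ => ⟨(-m).toNat, ?_⟩⟩
    · have := congrArg Subtype.val hkl
      simp only [e, neg_inj] at this
      have := mul_left_cancel₀ hn'.ne' this
      omega
    · have hm1 : m ≤ 0 := by nlinarith
      ext
      simp only [e]
      rw [Int.toNat_of_nonneg (by omega)]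
      linarith
  exact ((Equiv.ofBijective e he).tprod_eq fun ℓ => f ℓ).symm

lemma thetaNA_zero {q : ℂ} (hq : ‖q‖ < 1) {n : ℕ} (hn : 0 < n) (u : ℂ) :
    thetaNA q n 0 u = (1 - u ^ (-(n : ℤ))) *
      ∏' k : ℕ, ((1 - q ^ (n * (k + 1)) * u ^ n) * (1 - q ^ (n * (k + 1)) * u ^ (-(n : ℤ)))) := by
  have hqn : ‖q ^ n‖ < 1 := by
    rw [norm_pow]
    exact pow_lt_one₀ (norm_nonneg q) hq hn.ne'
  have hmult : ∀ c : ℂ, Multipliable fun k : ℕ => 1 - q ^ (n * (k + 1)) * c := fun c =>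
    (multipliable_one_sub_pow_succ_mul hqn c).congr fun k => by rw [pow_mul]
  rw [thetaNA, tprod_multiples_pos (fun ℓ => 1 - q ^ ℓ * u ^ (n : ℤ)) hn,
    tprod_multiples_nonpos (fun ℓ => 1 - q ^ (-ℓ) * u ^ (-(n : ℤ))) hn,
    (hmult _).tprod_mul (hmult _)]
  simp only [neg_neg, ← Nat.cast_add_one, ← Nat.cast_mul, zpow_natCast]
  rw [tprod_eq_zero_mul' (f := fun k => 1 - q ^ (n * k) * u ^ (-(n : ℤ))) (hmult _)]
  simp only [mul_zero, pow_zero, one_mul]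
  ring

theorem prod_theta_roots_of_unity_general
    (q : ℂ) (hq1 : ‖q‖ < 1)
    (n : ℕ) (hn : 1 ≤ n) (u : ℂ) :
    ((Polynomial.nthRoots n (1 : ℂ)).map fun ζ => Theta q (ζ * u)).prod =
        (1 - u ^ (-(n : ℤ))) *
          ∏' k : ℕ, ((1 - q ^ (n * (k + 1)) * u ^ n) *
            (1 - q ^ (n * (k + 1)) * u ^ (-(n : ℤ)))) ∧
      (1 - u ^ (-(n : ℤ))) *
          ∏' k : ℕ, ((1 - q ^ (n * (k + 1)) * u ^ n) *
            (1 - q ^ (n * (k + 1)) * u ^ (-(n : ℤ)))) = thetaNA q n 0 u := by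
  have hω := Complex.isPrimitiveRoot_exp n (by omega)
  refine ⟨?_, (thetaNA_zero hq1 hn u).symm⟩
  rw [hω.multiset_prod_map_nthRoots_one, prod_nthRootsFinset_theta hq1 hn hω]
  simp only [mul_pow, ← pow_mul, inv_pow, zpow_neg, zpow_natCast, mul_comm _ n]

/-- for `0 < |q| < 1`, `n ≥ 1` and `u ≠ 0`, the product of `Θ(ζu)` over all
`n`-th roots of unity `ζ` equals
`(1 − u^{−n})·∏_{k≥1}(1 − q^{nk}uⁿ)(1 − q^{nk}u^{−n}) = ϑⁿ₀(u)`. -/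
theorem prod_theta_roots_of_unity
    (q : ℂ) (hq0 : 0 < ‖q‖) (hq1 : ‖q‖ < 1)
    (n : ℕ) (hn : 1 ≤ n) (u : ℂ) (hu : u ≠ 0) :
    ((Polynomial.nthRoots n (1 : ℂ)).map fun ζ => Theta q (ζ * u)).prod =
        (1 - u ^ (-(n : ℤ))) *
          ∏' k : ℕ, ((1 - q ^ (n * (k + 1)) * u ^ n) *
            (1 - q ^ (n * (k + 1)) * u ^ (-(n : ℤ)))) ∧
      (1 - u ^ (-(n : ℤ))) *
          ∏' k : ℕ, ((1 - q ^ (n * (k + 1)) * u ^ n) *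
            (1 - q ^ (n * (k + 1)) * u ^ (-(n : ℤ)))) = thetaNA q n 0 u :=
  prod_theta_roots_of_unity_general q hq1 n hn u
end

section
/- Let L ⊆ L₀ be lattices in ℂ with [L₀ : L] = n, χ : L₀/L → ℂˣ a homomorphism, and f a Jacobi function with character χ whose divisor is −1 on L₀, +1 on r + L₀ (r ∉ L₀, n·r ∈ L), and 0 elsewhere, normalized so that z·f(z) → 1 as z → 0; let c ∈ ℂˣ satisfy f(u)f(r−u) = c for all admissible u. Let m be a positive integer, let s ∈ ℂ satisfy m·s − r ∈ L, and let h ∈ ℂ satisfy m·h ∈ L₀. Then z ↦ 1/f(mz) has a simple pole at z = s + h with residue −χ(−m·h mod L)/(m·c); that is, (z − (s+h))/f(mz) tends to −χ(−m·h mod L)/(m·c) as z → s+h. -/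
open Complex Filter Topology
open scoped Classical

/-- A lattice in `ℂ`: an additive subgroup generated by two `ℝ`-linearly
independent complex numbers. -/
def IsComplexLattice (L : AddSubgroup ℂ) : Prop :=
  ∃ ω₁ ω₂ : ℂ, LinearIndependent ℝ ![ω₁, ω₂] ∧ L = AddSubgroup.closure {ω₁, ω₂}

/-!
Put `g = m·h ∈ L₀`. The Jacobi relation for `-g` turns `z·f(z) → 1` into `u·f(u - g) → χ(-g)`
at `0`. Near `r + g` the modulus relation `f(v)·f(r - v) = c` holds (`L₀` is discrete), so
`1/f(v) = f(r - v)/c` and `1/f` has residue `-χ(-g)/c` at `r + g`. Finally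
`f(mz) = f(mz - (ms - r))` by `L`-periodicity, and `z ↦ mz - (ms - r)` sends `s + h` to `r + g`,
which divides the residue by `m`.
-/

theorem IsComplexLattice.discreteTopology {L : AddSubgroup ℂ} (hL : IsComplexLattice L) :
    DiscreteTopology L := by
  obtain ⟨ω₁, ω₂, hind, rfl⟩ := hL
  let b := basisOfLinearIndependentOfCardEqFinrank hind (by simp [Complex.finrank_real_complex])
  have hb : Set.range b = {ω₁, ω₂} := by
    rw [coe_basisOfLinearIndependentOfCardEqFinrank, Matrix.range_cons_cons_empty]
  rw [← hb, ← Submodule.span_int_eq_addSubgroupClosure]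
  infer_instance

theorem IsComplexLattice.eventually_sub_notMem {L : AddSubgroup ℂ} (hL : IsComplexLattice L)
    (x y : ℂ) : ∀ᶠ z in 𝓝[≠] x, z - y ∉ L := by
  have := hL.discreteTopology
  have hdisj := isClosed_and_discrete_iff.1
    ⟨AddSubgroup.isClosed_of_discrete, isDiscrete_iff_discreteTopology.2 this⟩ (x - y)
  rwa [← Filter.map_subRight_nhdsNE (c := y), disjoint_principal_right] at hdisj

section

variable {𝕜 : Type*} [Field 𝕜] [TopologicalSpace 𝕜] [IsTopologicalRing 𝕜]

theorem tendsto_mul_add_nhdsNE {a : 𝕜} (ha : a ≠ 0) (b x : 𝕜) :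
    Tendsto (fun z ↦ a * z + b) (𝓝[≠] x) (𝓝[≠] (a * x + b)) :=
  ((Homeomorph.mulLeft₀ a ha).trans (Homeomorph.addRight b)).map_punctured_nhds_eq x |>.le

theorem tendsto_sub_div_comp_mul_add {F : 𝕜 → 𝕜} {a b z₀ w R : 𝕜} (ha : a ≠ 0)
    (hw : a * z₀ + b = w) (hF : Tendsto (fun v ↦ (v - w) / F v) (𝓝[≠] w) (𝓝 R)) :
    Tendsto (fun z ↦ (z - z₀) / F (a * z + b)) (𝓝[≠] z₀) (𝓝 (R / a)) := by
  subst hw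
  refine ((hF.comp (tendsto_mul_add_nhdsNE ha b z₀)).div_const a).congr fun z ↦ ?_
  simp only [Function.comp, add_sub_add_right_eq_sub, ← mul_sub]
  field_simp

theorem tendsto_sub_div_of_mul_reflect_eq {f : 𝕜 → 𝕜} {r d k c : 𝕜} (hc : c ≠ 0)
    (hrefl : ∀ᶠ v in 𝓝[≠] (r - d), f v * f (r - v) = c)
    (hk : Tendsto (fun u ↦ u * f (u + d)) (𝓝[≠] 0) (𝓝 k)) :
    Tendsto (fun v ↦ (v - (r - d)) / f v) (𝓝[≠] (r - d)) (𝓝 (-k / c)) := by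
  have hflip : Tendsto (fun v ↦ r - d - v) (𝓝[≠] (r - d)) (𝓝[≠] 0) := by
    have := (Filter.map_subLeft_nhdsNE (c := r - d) (a := r - d)).le
    rwa [sub_self] at this
  refine ((hk.comp hflip).neg.div_const c).congr' ?_
  filter_upwards [hrefl] with v hv
  obtain ⟨hfv, hfrv⟩ := mul_ne_zero_iff.1 (hv ▸ hc)
  simp only [Function.comp, sub_right_comm r d v, sub_add_cancel, ← hv]
  field_simp
  ring

end

theorem MeromorphicAt.tendsto_mul_comp_add_of_translate {𝕜 : Type*} [NontriviallyNormedField 𝕜]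
    [CompleteSpace 𝕜] {f : 𝕜 → 𝕜} (hf : MeromorphicAt f 0) {d k : 𝕜}
    (htrans : ∀ u, AnalyticAt 𝕜 f u → f (u + d) = k * f u)
    (hnorm : Tendsto (fun z ↦ z * f z) (𝓝[≠] 0) (𝓝 1)) :
    Tendsto (fun u ↦ u * f (u + d)) (𝓝[≠] 0) (𝓝 k) := by
  refine (mul_one k ▸ hnorm.const_mul k).congr' ?_
  filter_upwards [hf.eventually_analyticAt] with u hu
  rw [htrans u hu]
  ring

theorem residue_of_inv_jacobi_general
    (L L₀ : AddSubgroup ℂ) (hL₀ : IsComplexLattice L₀)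
    (χ : ℂ → ℂˣ)
    (f : ℂ → ℂ) (hf : ∀ z : ℂ, MeromorphicAt f z)
    (hper : ∀ ω ∈ L, ∀ z : ℂ, f (z + ω) = f z)
    (r : ℂ)
    (hjac : ∀ g ∈ L₀, ∀ u : ℂ, AnalyticAt ℂ f u → f (u + g) = χ g * f u)
    (hnorm : Tendsto (fun z : ℂ => z * f z) (𝓝[≠] 0) (𝓝 1))
    (c : ℂˣ)
    (hc : ∀ u : ℂ, u ∉ L₀ → u - r ∉ L₀ → f u * f (r - u) = c)
    (m : ℕ) (hm : 0 < m)
    (s : ℂ) (hs : (m : ℂ) * s - r ∈ L)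
    (h : ℂ) (hh : (m : ℂ) * h ∈ L₀) :
    Tendsto (fun z : ℂ => (z - (s + h)) / f ((m : ℂ) * z)) (𝓝[≠] (s + h))
      (𝓝 (-(χ (-((m : ℂ) * h)) : ℂ) / ((m : ℂ) * (c : ℂ)))) := by
  have hnear0 := (hf 0).tendsto_mul_comp_add_of_translate (hjac _ (neg_mem hh)) hnorm
  have hrefl : ∀ᶠ v in 𝓝[≠] (r - -((m : ℂ) * h)), f v * f (r - v) = c := by
    filter_upwards [hL₀.eventually_sub_notMem _ 0, hL₀.eventually_sub_notMem _ r] with v h0 hr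
    exact hc v (by simpa using h0) hr
  have hres := tendsto_sub_div_comp_mul_add (z₀ := s + h) (b := -((m : ℂ) * s - r))
    (Nat.cast_ne_zero.2 hm.ne') (by ring) (tendsto_sub_div_of_mul_reflect_eq c.ne_zero hrefl hnear0)
  rw [div_div, mul_comm (c : ℂ)] at hres
  refine hres.congr fun z ↦ ?_
  rw [hper _ (neg_mem hs)]

/-- residues of `1/f(mz)`.  Let `f` be the normalized Jacobi function with
character `χ` (a homomorphism `L₀/L → ℂˣ`, encoded as a function on `ℂ` multiplicative
on `L₀` and `L`-invariant), with divisor `−1` on `L₀`, `+1` on `r + L₀` (`r ∉ L₀`,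
`n·r ∈ L`), normalized so that `z·f(z) → 1` as `z → 0`, and with modulus `c` at `r`.
If `m·s − r ∈ L` and `m·h ∈ L₀`, then `z ↦ 1/f(mz)` has a simple pole at `s + h` with
residue `−χ(−m·h)/(m·c)`. -/
theorem residue_of_inv_jacobi
    (L L₀ : AddSubgroup ℂ) (hL : IsComplexLattice L) (hL₀ : IsComplexLattice L₀)
    (hLL₀ : L ≤ L₀) (n : ℕ) (hn : L.relIndex L₀ = n)
    (χ : ℂ → ℂˣ)
    (hχ_hom : ∀ g ∈ L₀, ∀ g' ∈ L₀, χ (g + g') = χ g * χ g')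
    (hχ_per : ∀ g ∈ L₀, ∀ w ∈ L, χ (g + w) = χ g)
    (f : ℂ → ℂ) (hf : ∀ z : ℂ, MeromorphicAt f z)
    (hper : ∀ ω ∈ L, ∀ z : ℂ, f (z + ω) = f z)
    (r : ℂ) (hr₁ : r ∉ L₀) (hr₂ : (n : ℂ) * r ∈ L)
    (hdiv : ∀ z : ℂ, ∀ hz : MeromorphicAt f z,
      meromorphicOrderAt f z = (if z ∈ L₀ then (-1 : ℤ) else if z - r ∈ L₀ then 1 else 0 : ℤ))
    (hjac : ∀ g ∈ L₀, ∀ u : ℂ, AnalyticAt ℂ f u → f (u + g) = χ g * f u)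
    (hnorm : Tendsto (fun z : ℂ => z * f z) (𝓝[≠] 0) (𝓝 1))
    (c : ℂˣ)
    (hc : ∀ u : ℂ, u ∉ L₀ → u - r ∉ L₀ → f u * f (r - u) = c)
    (m : ℕ) (hm : 0 < m)
    (s : ℂ) (hs : (m : ℂ) * s - r ∈ L)
    (h : ℂ) (hh : (m : ℂ) * h ∈ L₀) :
    Tendsto (fun z : ℂ => (z - (s + h)) / f ((m : ℂ) * z)) (𝓝[≠] (s + h))
      (𝓝 (-(χ (-((m : ℂ) * h)) : ℂ) / ((m : ℂ) * (c : ℂ)))) :=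
  residue_of_inv_jacobi_general L L₀ hL₀ χ f hf hper r hjac hnorm c hc m hm s hs h hh
end
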